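/- Let (𝒜, ℬ) be a small cotorsion pair in a Grothendieck category 𝒢 with a generator G ∈ 𝒜. If the induced cotorsion pairs (dg-𝒜, ℬ̃) and (𝒜̃, dg-ℬ) on Ch(𝒢) are compatible (i.e., dg-𝒜 ∩ ℰ = 𝒜̃ and dg-ℬ ∩ ℰ = ℬ̃, where ℰ is the class of exact complexes), then 𝒜 is closed under kernels of epimorphisms between objects of 𝒜 and ℬ is closed under cokernels of monomorphisms between objects of ℬ. -/

import Mathlib

/-!
Kernels: given `0 → X → A₀ → A → 0` with `A₀, A ∈ 𝒜`, resolve `X` by coproducts of the generator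
`G ∈ 𝒜` and splice, getting an exact complex `⋯ → ∐ G → ∐ G → A₀ → A → 0` of objects of `𝒜` that
vanishes in negative degrees. Building a null homotopy degree by degree, using `Ext¹(𝒜, ℬ) = 0`
against the cycles of the target, shows that every map from such a complex to a complex in `ℬ̃`
is null homotopic, so the complex lies in `dg-𝒜 ∩ ℰ = 𝒜̃` and its cycle object `X` is in `𝒜`.

Cokernels: this is the classical fact that `𝒜` being closed under kernels of epimorphisms forces
`ℬ` to be closed under cokernels of monomorphisms, once every object is a quotient of an object
of `𝒜` (here of a coproduct of copies of `G`).
-/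

open CategoryTheory Limits

universe v u

variable {𝒢 : Type u} [Category.{v} 𝒢] [Abelian 𝒢]

/-- `Ext¹(A, B) = 0`, expressed by the splitting of every short exact sequence
`0 → B → T → A → 0`. -/
def Ext1IsZero (A B : 𝒢) : Prop :=
  ∀ (T : 𝒢) (k : B ⟶ T) (r : T ⟶ A) (w : k ≫ r = 0),
    Mono k → Epi r → (ShortComplex.mk k r w).Exact → ∃ s : A ⟶ T, s ≫ r = 𝟙 A

/-- `(𝒜, ℬ)` is a cotorsion pair: each class is the `Ext¹`-orthogonal of the other. -/
structure IsCotorsionPair (𝒜 ℬ : Set 𝒢) : Prop where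
  mem_left : ∀ X : 𝒢, X ∈ 𝒜 ↔ ∀ B ∈ ℬ, Ext1IsZero X B
  mem_right : ∀ Y : 𝒢, Y ∈ ℬ ↔ ∀ A ∈ 𝒜, Ext1IsZero A Y

/-- A set `I` of generating monomorphisms exhibiting a cotorsion pair `(𝒜, ℬ)` as *small*:
the family `f i : dom i ⟶ cod i` consists of monomorphisms, it contains the map
`0 ⟶ G` for a generator `G ∈ 𝒜` (the index `i₀`), the cokernels of its members
cogenerate the pair, and surjectivity of all `Hom(f i, X)` forces `X ∈ ℬ`. -/
structure SmallCotorsionData (𝒜 ℬ : Set 𝒢) where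
  ι : Type v
  dom : ι → 𝒢
  cod : ι → 𝒢
  f : ∀ i, dom i ⟶ cod i
  mono : ∀ i, Mono (f i)
  i₀ : ι
  dom_i₀_zero : IsZero (dom i₀)
  cod_i₀_separator : IsSeparator (cod i₀)
  cod_i₀_mem : cod i₀ ∈ 𝒜
  cogenerates : ∀ Y : 𝒢, Y ∈ ℬ ↔ ∀ i, Ext1IsZero (cokernel (f i)) Y
  detects : ∀ X : 𝒢,
    (∀ i, Function.Surjective (fun g : cod i ⟶ X => f i ≫ g)) → X ∈ ℬ

/-- A chain complex is exact (acyclic). -/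
def IsExactComplex (X : ChainComplex 𝒢 ℤ) : Prop := ∀ n : ℤ, X.ExactAt n

/-- `𝒜̃`: exact complexes with all cycles in `𝒜`. -/
def ATilde (𝒜 : Set 𝒢) (X : ChainComplex 𝒢 ℤ) : Prop :=
  IsExactComplex X ∧ ∀ n : ℤ, X.cycles n ∈ 𝒜

/-- `ℬ̃`: exact complexes with all cycles in `ℬ`. -/
def BTilde (ℬ : Set 𝒢) (X : ChainComplex 𝒢 ℤ) : Prop :=
  IsExactComplex X ∧ ∀ n : ℤ, X.cycles n ∈ ℬ

/-- `dg-𝒜`: complexes with entries in `𝒜` such that every chain map to a complex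
in `ℬ̃` is null homotopic. -/
def DgA (𝒜 ℬ : Set 𝒢) (X : ChainComplex 𝒢 ℤ) : Prop :=
  (∀ n : ℤ, X.X n ∈ 𝒜) ∧
    ∀ (B : ChainComplex 𝒢 ℤ), BTilde ℬ B → ∀ f : X ⟶ B, Nonempty (Homotopy f 0)

/-- `dg-ℬ`: complexes with entries in `ℬ` such that every chain map from a complex
in `𝒜̃` is null homotopic. -/
def DgB (𝒜 ℬ : Set 𝒢) (Y : ChainComplex 𝒢 ℤ) : Prop :=
  (∀ n : ℤ, Y.X n ∈ ℬ) ∧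
    ∀ (A : ChainComplex 𝒢 ℤ), ATilde 𝒜 A → ∀ f : A ⟶ Y, Nonempty (Homotopy f 0)


open ZeroObject

namespace Ext1IsZero

lemma exists_section {S : ShortComplex 𝒢} (hS : S.ShortExact) (h : Ext1IsZero S.X₃ S.X₁) :
    ∃ s : S.X₃ ⟶ S.X₂, s ≫ S.g = 𝟙 S.X₃ :=
  h S.X₂ S.f S.g S.zero hS.mono_f hS.epi_g hS.exact

/-- Pulling `S` back along `g` gives an extension of `Q` by `S.X₁`, which splits. -/
lemma exists_lift {S : ShortComplex 𝒢} (hS : S.ShortExact) {Q : 𝒢} (h : Ext1IsZero Q S.X₁)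
    (g : Q ⟶ S.X₃) : ∃ l : Q ⟶ S.X₂, l ≫ S.g = g := by
  have := hS.mono_f
  have := hS.epi_g
  let k : S.X₁ ⟶ pullback S.g g := pullback.lift S.f 0 (by simp)
  have hk : k ≫ pullback.snd S.g g = 0 := pullback.lift_snd _ _ _
  have : Mono k := mono_of_mono_fac (pullback.lift_fst _ _ _)
  have hP : (ShortComplex.mk k (pullback.snd S.g g) hk).ShortExact := by
    refine { exact := ShortComplex.exact_of_f_is_kernel _ ?_ }
    refine KernelFork.IsLimit.ofι' k hk fun t ht => ⟨hS.exact.lift (t ≫ pullback.fst _ _) ?_, ?_⟩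
    · rw [Category.assoc, pullback.condition, reassoc_of% ht, zero_comp]
    · apply pullback.hom_ext
      · rw [Category.assoc, pullback.lift_fst, hS.exact.lift_f]
      · rw [Category.assoc, hk, comp_zero, ht]
  obtain ⟨s, hs⟩ := exists_section hP h
  exact ⟨s ≫ pullback.fst _ _, by rw [Category.assoc, pullback.condition, reassoc_of% hs]⟩

/-- Pushing `S` out along `g` gives an extension of `S.X₃` by `W`, which splits. -/
lemma exists_extension {S : ShortComplex 𝒢} (hS : S.ShortExact) {W : 𝒢} (h : Ext1IsZero S.X₃ W)
    (g : S.X₁ ⟶ W) : ∃ e : S.X₂ ⟶ W, S.f ≫ e = g := by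
  have := hS.mono_f
  have := hS.epi_g
  let ρ : pushout S.f g ⟶ S.X₃ := pushout.desc S.g 0 (by simp)
  have hρ : pushout.inr S.f g ≫ ρ = 0 := pushout.inr_desc _ _ _
  have : Epi ρ := epi_of_epi_fac (pushout.inl_desc _ _ _)
  have hP : (ShortComplex.mk (pushout.inr S.f g) ρ hρ).ShortExact := by
    refine { exact := ShortComplex.exact_of_g_is_cokernel _ ?_ }
    refine CokernelCofork.IsColimit.ofπ' ρ hρ fun t ht =>
      ⟨hS.exact.desc (pushout.inl _ _ ≫ t) ?_, ?_⟩
    · rw [← Category.assoc, pushout.condition, Category.assoc, ht, comp_zero]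
    · apply pushout.hom_ext
      · rw [← Category.assoc, pushout.inl_desc, hS.exact.g_desc]
      · rw [← Category.assoc, hρ, zero_comp, ht]
  obtain ⟨s, hs⟩ := exists_section hP h
  let σ := ShortComplex.Splitting.ofExactOfSection _ hP.exact s hs hP.mono_f
  exact ⟨pushout.inl _ _ ≫ σ.r, by rw [← Category.assoc, pushout.condition, Category.assoc, σ.f_r,
    Category.comp_id]⟩

lemma of_isZero_left {A B : 𝒢} (hA : IsZero A) : Ext1IsZero A B :=
  fun _ _ _ _ _ _ _ => ⟨0, hA.eq_of_src _ _⟩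

lemma of_iso_left {A A' B : 𝒢} (e : A ≅ A') (h : Ext1IsZero A B) : Ext1IsZero A' B := by
  intro T k r w _ _ hex
  obtain ⟨l, hl⟩ := exists_lift ⟨hex⟩ h e.hom
  exact ⟨e.inv ≫ l, by simp [hl]⟩

lemma sigma {ι : Type*} (F : ι → 𝒢) [HasCoproduct F] {B : 𝒢} (h : ∀ i, Ext1IsZero (F i) B) :
    Ext1IsZero (∐ F) B := by
  intro T k r w _ _ hex
  choose l hl using fun i => exists_lift ⟨hex⟩ (h i) (Sigma.ι F i)
  exact ⟨Sigma.desc l, Sigma.hom_ext _ _ fun i => by simp [hl]⟩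

end Ext1IsZero

namespace IsCotorsionPair

variable {𝒜 ℬ : Set 𝒢}

lemma mem_left_of_iso (hp : IsCotorsionPair 𝒜 ℬ) {X Y : 𝒢} (e : X ≅ Y) (hX : X ∈ 𝒜) : Y ∈ 𝒜 :=
  (hp.mem_left Y).2 fun B hB => ((hp.mem_left X).1 hX B hB).of_iso_left e

lemma mem_left_of_isZero (hp : IsCotorsionPair 𝒜 ℬ) {X : 𝒢} (hX : IsZero X) : X ∈ 𝒜 :=
  (hp.mem_left X).2 fun _ _ => .of_isZero_left hX

lemma sigma_mem_left (hp : IsCotorsionPair 𝒜 ℬ) {ι : Type*} (F : ι → 𝒢) [HasCoproduct F]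
    (hF : ∀ i, F i ∈ 𝒜) : ∐ F ∈ 𝒜 :=
  (hp.mem_left _).2 fun B hB => .sigma F fun i => (hp.mem_left _).1 (hF i) B hB

end IsCotorsionPair

namespace HomologicalComplex

variable {ι : Type*} {c : ComplexShape ι} (K : HomologicalComplex 𝒢 c)

/-- At an exact spot `j`, the sequence `0 → Zᵢ → Kᵢ → Zⱼ → 0` of cycles is short exact. -/
lemma exists_lift_of_exactAt {i j k : ι} (hij : c.Rel i j) (hjk : c.Rel j k) (hK : K.ExactAt j)
    {Q : 𝒢} (h : Ext1IsZero Q (K.cycles i)) (g : Q ⟶ K.X j) (hg : g ≫ K.d j k = 0) :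
    ∃ l : Q ⟶ K.X i, l ≫ K.d i j = g := by
  have hS : (ShortComplex.mk (K.iCycles i) (K.toCycles i j)
      (by simp [← cancel_mono (K.iCycles j)])).ShortExact := by
    obtain rfl := c.prev_eq' hij
    refine { exact := ShortComplex.exact_of_f_is_kernel _ ?_, epi_g := hK.epi_toCycles }
    exact isKernelOfComp (K.iCycles j) _ (K.cyclesIsKernel _ j (c.next_eq' hij)) _
      (K.toCycles_i _ j)
  obtain ⟨l, hl⟩ := h.exists_lift hS (K.liftCycles g k (c.next_eq' hjk) hg)
  exact ⟨l, by rw [← K.toCycles_i, ← Category.assoc]; exact hl ▸ K.liftCycles_i _ _ _ _⟩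

end HomologicalComplex

section NullHomotopic

variable {𝒜 ℬ : Set 𝒢} {C B : ChainComplex 𝒢 ℤ} (f : C ⟶ B)

lemma exists_homotopy_step (hp : IsCotorsionPair 𝒜 ℬ) (hC : ∀ n, C.X n ∈ 𝒜) (hB : BTilde ℬ B)
    (n : ℤ) (s : C.X n ⟶ B.X (n + 1)) (hs : C.d (n + 1) n ≫ (f.f n - s ≫ B.d (n + 1) n) = 0) :
    ∃ s' : C.X (n + 1) ⟶ B.X (n + 1 + 1),
      s' ≫ B.d (n + 1 + 1) (n + 1) = f.f (n + 1) - C.d (n + 1) n ≫ s ∧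
      C.d (n + 1 + 1) (n + 1) ≫ (f.f (n + 1) - s' ≫ B.d (n + 1 + 1) (n + 1)) = 0 := by
  obtain ⟨s', hs'⟩ := B.exists_lift_of_exactAt (i := n + 1 + 1) (k := n) rfl rfl (hB.1 _)
    ((hp.mem_left _).1 (hC _) _ (hB.2 _)) (f.f (n + 1) - C.d (n + 1) n ≫ s)
    (by rw [Preadditive.sub_comp, f.comm, Category.assoc, ← Preadditive.comp_sub, hs])
  exact ⟨s', hs', by rw [hs', sub_sub_cancel, C.d_comp_d_assoc, zero_comp]⟩

/-- Build the homotopy `s n : Cₙ → Bₙ₊₁` upwards from a degree `b` below which `C` vanishes; each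
step lifts `f - d s` through `B` using `Ext¹(Cₙ, Zₙ₊₁(B)) = 0`. -/
lemma nonempty_homotopy_zero_of_isZero (hp : IsCotorsionPair 𝒜 ℬ) (b : ℤ)
    (hCb : ∀ n ≤ b, IsZero (C.X n)) (hC : ∀ n, C.X n ∈ 𝒜) (hB : BTilde ℬ B) :
    Nonempty (Homotopy f 0) := by
  choose next hnext hinv using exists_homotopy_step f hp hC hB
  let P : ℤ → Type _ := fun n =>
    {s : C.X n ⟶ B.X (n + 1) // C.d (n + 1) n ≫ (f.f n - s ≫ B.d (n + 1) n) = 0}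
  have hP : ∀ n ≤ b, P n := fun n hn => ⟨0, by simp [(hCb n hn).eq_of_src (f.f n) 0]⟩
  let s : ∀ n, P n := fun n => n.inductionOn' b (hP b le_rfl)
    (fun k _ t => ⟨next k t.1 t.2, hinv k t.1 t.2⟩) (fun k hk _ => hP (k - 1) (by omega))
  have hs : ∀ n,
      f.f (n + 1) = C.d (n + 1) n ≫ (s n).1 + (s (n + 1)).1 ≫ B.d (n + 1 + 1) (n + 1) := by
    intro n
    by_cases hn : b ≤ n
    · simp only [s, Int.inductionOn'_add_one hn, hnext, add_sub_cancel]
    · exact (hCb (n + 1) (by omega)).eq_of_src _ _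
  let h : ∀ i j, (ComplexShape.down ℤ).Rel j i → (C.X i ⟶ B.X j) :=
    fun i j hij => (s i).1 ≫ eqToHom (congrArg B.X hij)
  have hf : f = Homotopy.nullHomotopicMap' h := by
    ext n
    obtain ⟨n, rfl⟩ : ∃ m, n = m + 1 := ⟨n - 1, by omega⟩
    rw [Homotopy.nullHomotopicMap'_f (c := ComplexShape.down ℤ) (k₂ := n + 1 + 1) rfl rfl, hs n]
    simp [h]
  exact ⟨(Homotopy.ofEq hf).trans (Homotopy.nullHomotopy' h)⟩

end NullHomotopic

section Splice

variable (C Z : ℤ → 𝒢) (e : ∀ n, C (n + 1) ⟶ Z n) (m : ∀ n, Z n ⟶ C n)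
  (w : ∀ n, m (n + 1) ≫ e n = 0)

noncomputable abbrev splice : ChainComplex 𝒢 ℤ :=
  ChainComplex.of C (fun n => e n ≫ m n) fun n => by simp [reassoc_of% w]

lemma splice_d (n : ℤ) : (splice C Z e m w).d (n + 1) n = e n ≫ m n :=
  ChainComplex.of_d C (fun n => e n ≫ m n) n

variable {C Z e m w}

/-- A cycle of degree `n + 1` is a map into `Zₙ₊₁` by exactness, and then a boundary since
`Cₙ₊₂ → Zₙ₊₁` is epi; everything holds up to refinements. -/
lemma splice_exactAt (n : ℤ) [Epi (e (n + 1))] [Mono (m n)]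
    (h : (ShortComplex.mk _ _ (w n)).Exact) : (splice C Z e m w).ExactAt (n + 1) := by
  rw [HomologicalComplex.exactAt_iff_exact_up_to_refinements _ (n + 1 + 1) (n + 1) n (by simp)
    (by simp)]
  intro A x hx
  rw [splice_d, ← Category.assoc, ← zero_comp (f := m n), cancel_mono] at hx
  obtain ⟨A', π, _, y, hy⟩ := h.exact_up_to_refinements x hx
  obtain ⟨A'', π', _, z, hz⟩ := surjective_up_to_refinements_of_epi (e (n + 1)) y
  exact ⟨A'', π' ≫ π, epi_comp _ _, z, by simp [hy, reassoc_of% hz]⟩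

noncomputable def spliceCyclesIso (n : ℤ) [Mono (m n)] [Mono (m (n + 1))]
    (h : (ShortComplex.mk _ _ (w n)).Exact) : (splice C Z e m w).cycles (n + 1) ≅ Z (n + 1) :=
  IsLimit.conePointUniqueUpToIso ((splice C Z e m w).cyclesIsKernel (n + 1) n (by simp))
    (isKernelCompMono h.fIsKernel (m n) (splice_d C Z e m w n))

end Splice

section Resolution

variable [HasColimits 𝒢]

noncomputable def generatorCover (G T : 𝒢) : ∐ (fun _ : G ⟶ T => G) ⟶ T :=
  Sigma.desc fun f => f

noncomputable def kernelTower (G X : 𝒢) : ℕ → 𝒢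
  | 0 => X
  | n + 1 => kernel (generatorCover G (kernelTower G X n))

/-- The terms of `⋯ → ∐ G → ∐ G → A₀ → A → 0 → ⋯` (with `A` in degree `0`), to be spliced from
`0 → X → A₀ → A → 0` and the short exact sequences `0 → Kₙ₊₁ → ∐ G → Kₙ → 0` of the kernel
tower `K` of `X`; `resolutionCycles` lists the objects of cycles. -/
noncomputable def resolutionObj (G X A₀ A : 𝒢) : ℤ → 𝒢
  | .ofNat 0 => A
  | .ofNat 1 => A₀
  | .ofNat (n + 2) => ∐ fun _ : G ⟶ kernelTower G X n => G
  | .negSucc _ => 0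

noncomputable def resolutionCycles (G X A : 𝒢) : ℤ → 𝒢
  | .ofNat 0 => A
  | .ofNat (n + 1) => kernelTower G X n
  | .negSucc _ => 0

noncomputable def resolutionEpi (G X : 𝒢) {A₀ A : 𝒢} (p : A₀ ⟶ A) :
    ∀ n, resolutionObj G X A₀ A (n + 1) ⟶ resolutionCycles G X A n
  | .ofNat 0 => p
  | .ofNat (n + 1) => generatorCover G (kernelTower G X n)
  | .negSucc _ => 0

noncomputable def resolutionMono (G A : 𝒢) {X A₀ : 𝒢} (i : X ⟶ A₀) :
    ∀ n, resolutionCycles G X A n ⟶ resolutionObj G X A₀ A n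
  | .ofNat 0 => 𝟙 A
  | .ofNat 1 => i
  | .ofNat (n + 2) => kernel.ι (generatorCover G (kernelTower G X n))
  | .negSucc _ => 0

variable {G X A₀ A : 𝒢} {i : X ⟶ A₀} {p : A₀ ⟶ A}

lemma resolutionMono_comp_resolutionEpi (w : i ≫ p = 0) :
    ∀ n, resolutionMono G A i (n + 1) ≫ resolutionEpi G X p n = 0
  | .ofNat 0 => w
  | .ofNat (_ + 1) => kernel.condition _
  | .negSucc 0 => comp_zero
  | .negSucc (_ + 1) => comp_zero

lemma epi_resolutionEpi (hG : IsSeparator G) [Epi p] : ∀ n, Epi (resolutionEpi G X p n)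
  | .ofNat 0 => ‹Epi p›
  | .ofNat (_ + 1) => (isSeparator_iff_epi G).1 hG _
  | .negSucc _ => epi_of_target_iso_zero _ (Iso.refl 0)

lemma mono_resolutionMono [Mono i] : ∀ n, Mono (resolutionMono G A i n)
  | .ofNat 0 => inferInstanceAs (Mono (𝟙 A))
  | .ofNat 1 => ‹Mono i›
  | .ofNat (_ + 2) => equalizer.ι_mono
  | .negSucc _ => mono_of_source_iso_zero _ (Iso.refl 0)

lemma resolution_shortComplex_exact (w : i ≫ p = 0) (hS : (ShortComplex.mk i p w).Exact) :
    ∀ n, (ShortComplex.mk _ _ (resolutionMono_comp_resolutionEpi (G := G) w n)).Exact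
  | .ofNat 0 => hS
  | .ofNat (_ + 1) => ShortComplex.exact_of_f_is_kernel _ (kernelIsKernel _)
  | .negSucc 0 => (ShortComplex.exact_iff_epi _ rfl).2 (inferInstanceAs (Epi (𝟙 A)))
  | .negSucc (_ + 1) => ShortComplex.exact_of_isZero_X₂ _ (isZero_zero 𝒢)

end Resolution

section KernelsOfEpis

variable [HasColimits 𝒢] {𝒜 ℬ : Set 𝒢} {G X A₀ A : 𝒢}

lemma resolutionObj_mem (hp : IsCotorsionPair 𝒜 ℬ) (hGA : G ∈ 𝒜) (hA₀ : A₀ ∈ 𝒜) (hA : A ∈ 𝒜) :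
    ∀ n, resolutionObj G X A₀ A n ∈ 𝒜
  | .ofNat 0 => hA
  | .ofNat 1 => hA₀
  | .ofNat (_ + 2) => hp.sigma_mem_left _ fun _ => hGA
  | .negSucc _ => hp.mem_left_of_isZero (isZero_zero 𝒢)

lemma isZero_resolutionObj {n : ℤ} (hn : n ≤ -1) : IsZero (resolutionObj G X A₀ A n) := by
  obtain ⟨k, rfl⟩ : ∃ k, n = .negSucc k := ⟨(-n - 1).toNat, by omega⟩
  exact isZero_zero 𝒢

theorem IsCotorsionPair.mem_left_of_shortExact (hp : IsCotorsionPair 𝒜 ℬ) (hG : IsSeparator G)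
    (hGA : G ∈ 𝒜) (hcompat : ∀ X, DgA 𝒜 ℬ X → IsExactComplex X → ATilde 𝒜 X)
    {S : ShortComplex 𝒢} (hS : S.ShortExact) (h₂ : S.X₂ ∈ 𝒜) (h₃ : S.X₃ ∈ 𝒜) : S.X₁ ∈ 𝒜 := by
  have := hS.mono_f
  have := hS.epi_g
  have := epi_resolutionEpi (X := S.X₁) hG (p := S.g)
  have := mono_resolutionMono (G := G) (A := S.X₃) (i := S.f)
  have hex := resolution_shortComplex_exact (G := G) S.zero hS.exact
  let R := splice _ _ _ _ (resolutionMono_comp_resolutionEpi (G := G) S.zero)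
  have hobj : ∀ n, R.X n ∈ 𝒜 := resolutionObj_mem hp hGA h₂ h₃
  have hR : ATilde 𝒜 R := by
    refine hcompat R ⟨hobj, fun B hB f => nonempty_homotopy_zero_of_isZero f hp (-1)
      (fun n hn => isZero_resolutionObj hn) hobj hB⟩ fun n => ?_
    obtain ⟨n, rfl⟩ : ∃ k, n = k + 1 := ⟨n - 1, by omega⟩
    exact splice_exactAt n (hex n)
  exact hp.mem_left_of_iso (spliceCyclesIso 0 (hex 0)) (hR.2 (0 + 1))

end KernelsOfEpis

/-- Given `0 → Y → T → A → 0` with `A ∈ 𝒜`, cover `T` by `P ∈ 𝒜`; the kernel `K` of `P ↠ A` lies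
in `𝒜`, so `K → Y` lifts to `B₁` and then extends over `P`. Subtracting that extension from
`P → T` kills `K`, and the induced map `A → T` splits the sequence. -/
theorem IsCotorsionPair.mem_right_of_shortExact {𝒜 ℬ : Set 𝒢} (hp : IsCotorsionPair 𝒜 ℬ)
    (hker : ∀ S : ShortComplex 𝒢, S.ShortExact → S.X₂ ∈ 𝒜 → S.X₃ ∈ 𝒜 → S.X₁ ∈ 𝒜)
    (hcover : ∀ T : 𝒢, ∃ P ∈ 𝒜, ∃ π : P ⟶ T, Epi π)
    {S : ShortComplex 𝒢} (hS : S.ShortExact) (h₁ : S.X₁ ∈ ℬ) (h₂ : S.X₂ ∈ ℬ) : S.X₃ ∈ ℬ := by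
  refine (hp.mem_right _).2 fun A hA T k r w _ _ hex => ?_
  obtain ⟨P, hP, π, _⟩ := hcover T
  let K := ShortComplex.mk (kernel.ι (π ≫ r)) (π ≫ r) (kernel.condition _)
  have hK : K.ShortExact := { exact := ShortComplex.exact_of_f_is_kernel _ (kernelIsKernel _) }
  have hKA : kernel (π ≫ r) ∈ 𝒜 := hker K hK hP hA
  let δ : kernel (π ≫ r) ⟶ S.X₃ := hex.lift (kernel.ι _ ≫ π) (by simp)
  obtain ⟨δ', hδ'⟩ := ((hp.mem_left _).1 hKA _ h₁).exists_lift hS δ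
  obtain ⟨ε, hε⟩ := ((hp.mem_left _).1 hA _ h₂).exists_extension hK δ'
  have hσ : kernel.ι (π ≫ r) ≫ (π - ε ≫ S.g ≫ k) = 0 := by
    rw [Preadditive.comp_sub, reassoc_of% hε, reassoc_of% hδ', hex.lift_f, sub_self]
  refine ⟨hK.exact.desc _ hσ, ?_⟩
  rw [← cancel_epi K.g, ← Category.assoc, hK.exact.g_desc]
  simp [K, w]

theorem stmt19_general [HasColimits 𝒢] (𝒜 ℬ : Set 𝒢)
    (hpair : IsCotorsionPair 𝒜 ℬ) (I : SmallCotorsionData 𝒜 ℬ)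
    (hcompatA : ∀ X : ChainComplex 𝒢 ℤ, (DgA 𝒜 ℬ X ∧ IsExactComplex X) ↔ ATilde 𝒜 X) :
    (∀ ⦃X A₀ A : 𝒢⦄ (i : X ⟶ A₀) (p : A₀ ⟶ A) (w : i ≫ p = 0),
        Mono i → Epi p → (ShortComplex.mk i p w).Exact → A₀ ∈ 𝒜 → A ∈ 𝒜 → X ∈ 𝒜) ∧
      (∀ ⦃B₀ B₁ Y : 𝒢⦄ (j : B₀ ⟶ B₁) (q : B₁ ⟶ Y) (w : j ≫ q = 0),
        Mono j → Epi q → (ShortComplex.mk j q w).Exact → B₀ ∈ ℬ → B₁ ∈ ℬ → Y ∈ ℬ) := by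
  have hker : ∀ S : ShortComplex 𝒢, S.ShortExact → S.X₂ ∈ 𝒜 → S.X₃ ∈ 𝒜 → S.X₁ ∈ 𝒜 :=
    fun S => hpair.mem_left_of_shortExact I.cod_i₀_separator I.cod_i₀_mem
      fun X hX hXe => (hcompatA X).1 ⟨hX, hXe⟩
  have hcover : ∀ T : 𝒢, ∃ P ∈ 𝒜, ∃ π : P ⟶ T, Epi π := fun T =>
    ⟨_, hpair.sigma_mem_left _ fun _ => I.cod_i₀_mem, generatorCover _ T,
      (isSeparator_iff_epi _).1 I.cod_i₀_separator T⟩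
  exact ⟨fun _ _ _ i p w _ _ hex => hker (.mk i p w) ⟨hex⟩,
    fun _ _ _ j q w _ _ hex => hpair.mem_right_of_shortExact hker hcover (S := .mk j q w) ⟨hex⟩⟩

/-- Let `(𝒜, ℬ)` be a small cotorsion pair in a Grothendieck category
with a generator `G ∈ 𝒜`.  If the induced cotorsion pairs `(dg-𝒜, ℬ̃)` and `(𝒜̃, dg-ℬ)`
on `Ch(𝒢)` are compatible, i.e. `dg-𝒜 ∩ ℰ = 𝒜̃` and `dg-ℬ ∩ ℰ = ℬ̃`, then `𝒜` is closed
under kernels of epimorphisms between objects of `𝒜` and `ℬ` is closed under cokernels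
of monomorphisms between objects of `ℬ`. -/
theorem stmt19 [HasColimits 𝒢] [AB5 𝒢] (𝒜 ℬ : Set 𝒢)
    (hpair : IsCotorsionPair 𝒜 ℬ) (I : SmallCotorsionData 𝒜 ℬ)
    (hcompatA : ∀ X : ChainComplex 𝒢 ℤ, (DgA 𝒜 ℬ X ∧ IsExactComplex X) ↔ ATilde 𝒜 X)
    (hcompatB : ∀ Y : ChainComplex 𝒢 ℤ, (DgB 𝒜 ℬ Y ∧ IsExactComplex Y) ↔ BTilde ℬ Y) :
    (∀ ⦃X A₀ A : 𝒢⦄ (i : X ⟶ A₀) (p : A₀ ⟶ A) (w : i ≫ p = 0),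
        Mono i → Epi p → (ShortComplex.mk i p w).Exact → A₀ ∈ 𝒜 → A ∈ 𝒜 → X ∈ 𝒜) ∧
      (∀ ⦃B₀ B₁ Y : 𝒢⦄ (j : B₀ ⟶ B₁) (q : B₁ ⟶ Y) (w : j ≫ q = 0),
        Mono j → Epi q → (ShortComplex.mk j q w).Exact → B₀ ∈ ℬ → B₁ ∈ ℬ → Y ∈ ℬ) :=
  stmt19_general 𝒜 ℬ hpair I hcompatA
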